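/- Let A be a unital C*-algebra of real rank zero, let X and Y be unital Banach right A-modules, and let T : X → Y be a continuous linear map such that e⊥Te = 0 for every projection e ∈ A (where (e⊥Te)(x) = T(x·e⊥)·e). Then T is a right A-module homomorphism, i.e., T(x·a) = T(x)·a for all x ∈ X and a ∈ A. -/

import Mathlib

/-! Since `x = x·e + x·e⊥`, the hypotheses for `e` and for `e⊥` together say that `T` commutes
with the action of every projection `e`. The elements of `A` whose action commutes with `T`
form a closed subspace, so it suffices that the projections span a dense subspace of `A`. In real
rank zero every self-adjoint element is a limit of self-adjoint elements with finite spectrum,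
each of which is a real combination of its spectral projections. -/

/-- A contractive Banach right module over a (possibly non-unital) C*-algebra `A`:
the action `(x, a) ↦ x·a` is a continuous bilinear map `X × A → X` satisfying
`(x·a)·b = x·(a*b)` and `‖x·a‖ ≤ ‖x‖·‖a‖`. -/
structure BanachRightModule (A X : Type*) [NonUnitalCStarAlgebra A]
    [NormedAddCommGroup X] [NormedSpace ℂ X] where
  act : X →L[ℂ] A →L[ℂ] X
  act_mul : ∀ (x : X) (a b : A), act (act x a) b = act x (a * b)
  norm_act_le : ∀ (x : X) (a : A), ‖act x a‖ ≤ ‖x‖ * ‖a‖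

section Defs

variable {A X Y : Type*} [NonUnitalCStarAlgebra A]
  [NormedAddCommGroup X] [NormedSpace ℂ X]
  [NormedAddCommGroup Y] [NormedSpace ℂ Y]

/-- A projection in a C*-algebra: a self-adjoint idempotent. -/
def IsProjection {A : Type*} [NonUnitalCStarAlgebra A] (e : A) : Prop :=
  IsSelfAdjoint e ∧ IsIdempotentElem e

/-- The operator `aTb : x ↦ T(x·a)·b`. -/
noncomputable def sandwich (ρX : BanachRightModule A X) (ρY : BanachRightModule A Y)
    (T : X →L[ℂ] Y) (a b : A) : X →L[ℂ] Y :=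
  ((ρY.act.flip b).comp T).comp (ρX.act.flip a)

/-- The set of continuous right `A`-module homomorphisms from `X` to `Y`. -/
def homSet (ρX : BanachRightModule A X) (ρY : BanachRightModule A Y) :
    Set (X →L[ℂ] Y) :=
  {Φ | ∀ (x : X) (a : A), Φ (ρX.act x a) = ρY.act (Φ x) a}

/-- `β(T) = sup{‖eTf‖ : e, f ∈ A projections with ef = 0}`. -/
noncomputable def betaConst (ρX : BanachRightModule A X) (ρY : BanachRightModule A Y)
    (T : X →L[ℂ] Y) : ℝ :=
  sSup {r : ℝ | ∃ e f : A, IsProjection e ∧ IsProjection f ∧ e * f = 0 ∧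
    r = ‖sandwich ρX ρY T e f‖}

/-- `γ(T) = sup{‖aTb‖ : a, b ∈ A positive contractions with ab = 0}`. -/
noncomputable def gammaConst [PartialOrder A] [StarOrderedRing A]
    (ρX : BanachRightModule A X) (ρY : BanachRightModule A Y)
    (T : X →L[ℂ] Y) : ℝ :=
  sSup {r : ℝ | ∃ a b : A, 0 ≤ a ∧ 0 ≤ b ∧ ‖a‖ ≤ 1 ∧ ‖b‖ ≤ 1 ∧ a * b = 0 ∧
    r = ‖sandwich ρX ρY T a b‖}

/-- `δ(T) = sup_{‖x‖ ≤ 1} inf{‖T(x) − Φ(x)‖ : Φ ∈ Hom_A(X,Y)}`. -/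
noncomputable def deltaConst (ρX : BanachRightModule A X) (ρY : BanachRightModule A Y)
    (T : X →L[ℂ] Y) : ℝ :=
  sSup {r : ℝ | ∃ x : X, ‖x‖ ≤ 1 ∧
    r = Metric.infDist (T x) ((fun Φ : X →L[ℂ] Y => Φ x) '' homSet ρX ρY)}

/-- `‖ad(T)‖ = sup{‖aT − Ta‖ : a ∈ A, ‖a‖ ≤ 1}`, where `(aT)(x) = T(x·a)` and
`(Ta)(x) = T(x)·a`. -/
noncomputable def adNorm (ρX : BanachRightModule A X) (ρY : BanachRightModule A Y)
    (T : X →L[ℂ] Y) : ℝ :=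
  sSup {r : ℝ | ∃ a : A, ‖a‖ ≤ 1 ∧
    r = ‖T.comp (ρX.act.flip a) - (ρY.act.flip a).comp T‖}

/-- The module `X` is essential: the linear span of `{x·a : x ∈ X, a ∈ A}` is dense. -/
def Essential (ρX : BanachRightModule A X) : Prop :=
  Dense (Submodule.span ℂ {z : X | ∃ (x : X) (a : A), z = ρX.act x a} : Set X)

end Defs

section

variable {A X Y : Type*}

theorem IsProjection.one_sub [CStarAlgebra A] {e : A} (he : IsProjection e) :
    IsProjection (1 - e) :=
  ⟨(IsSelfAdjoint.one A).sub he.1, he.2.one_sub⟩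

theorem isProjection_cfc [CStarAlgebra A] {f : ℝ → ℝ} (hf : ∀ t, f t * f t = f t) (b : A)
    (hcont : ContinuousOn f (spectrum ℝ b)) : IsProjection (cfc f b) := by
  refine ⟨cfc_predicate f b, ?_⟩
  rw [IsIdempotentElem, ← cfc_mul f f b]
  exact cfc_congr fun t _ => hf t

theorem IsSelfAdjoint.mem_span_isProjection_of_spectrum_finite [CStarAlgebra A] {b : A}
    (hb : IsSelfAdjoint b) (hfin : (spectrum ℝ b).Finite) :
    b ∈ Submodule.span ℝ {e : A | IsProjection e} := by
  classical
  let χ : ℝ → ℝ → ℝ := fun μ t => if t = μ then 1 else 0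
  have hχ : ∀ μ, IsProjection (cfc (χ μ) b) := fun μ =>
    isProjection_cfc (fun t => by by_cases ht : t = μ <;> simp [χ, ht]) b (hfin.continuousOn _)
  have hdecomp : b = ∑ μ ∈ hfin.toFinset, μ • cfc (χ μ) b := by
    calc b = cfc (∑ μ ∈ hfin.toFinset, fun t => μ * χ μ t) b := by
          conv_lhs => rw [← cfc_id ℝ b hb]
          refine cfc_congr fun t ht => ?_
          simp [χ, Finset.sum_apply, hfin.mem_toFinset.2 ht]
      _ = ∑ μ ∈ hfin.toFinset, μ • cfc (χ μ) b := by
          rw [cfc_sum _ b _ fun μ _ => hfin.continuousOn _]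
          exact Finset.sum_congr rfl fun μ _ => cfc_smul μ (χ μ) b (hfin.continuousOn _)
  rw [hdecomp]
  exact Submodule.sum_mem _ fun μ _ => Submodule.smul_mem _ μ (Submodule.subset_span (hχ μ))

theorem topologicalClosure_span_isProjection_eq_top [CStarAlgebra A]
    (hRR0 : ∀ a : A, IsSelfAdjoint a →
      a ∈ closure {b : A | IsSelfAdjoint b ∧ (spectrum ℂ b).Finite}) :
    (Submodule.span ℂ {e : A | IsProjection e}).topologicalClosure = ⊤ := by
  set P := (Submodule.span ℂ {e : A | IsProjection e}).topologicalClosure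
  have hfinite : {b : A | IsSelfAdjoint b ∧ (spectrum ℂ b).Finite} ⊆
      Submodule.span ℂ {e : A | IsProjection e} := by
    rintro b ⟨hb, hfin⟩
    have hfinℝ : (spectrum ℝ b).Finite := by
      rw [← spectrum.preimage_algebraMap ℂ]
      exact hfin.preimage (FaithfulSMul.algebraMap_injective ℝ ℂ).injOn
    exact Submodule.span_le_restrictScalars ℝ ℂ _
      (hb.mem_span_isProjection_of_spectrum_finite hfinℝ)
  have hsa : ∀ a : A, IsSelfAdjoint a → a ∈ P := fun a ha => by
    rw [← SetLike.mem_coe, Submodule.topologicalClosure_coe]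
    exact closure_mono hfinite (hRR0 a ha)
  refine Submodule.eq_top_iff'.2 fun a => ?_
  rw [← realPart_add_I_smul_imaginaryPart a]
  exact P.add_mem (hsa _ (realPart a).2) (P.smul_mem _ (hsa _ (imaginaryPart a).2))

section Intertwiners

variable [NormedAddCommGroup X] [NormedSpace ℂ X] [NormedAddCommGroup Y] [NormedSpace ℂ Y]

theorem sandwich_apply [NonUnitalCStarAlgebra A] (ρX : BanachRightModule A X)
    (ρY : BanachRightModule A Y) (T : X →L[ℂ] Y) (a b : A) (x : X) :
    sandwich ρX ρY T a b x = ρY.act (T (ρX.act x a)) b :=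
  rfl

noncomputable def intertwiners [NonUnitalCStarAlgebra A] (ρX : BanachRightModule A X)
    (ρY : BanachRightModule A Y) (T : X →L[ℂ] Y) : Submodule ℂ A :=
  ⨅ x : X, LinearMap.ker ((T.comp (ρX.act x) - ρY.act (T x) : A →L[ℂ] Y) : A →ₗ[ℂ] Y)

theorem mem_intertwiners [NonUnitalCStarAlgebra A] {ρX : BanachRightModule A X}
    {ρY : BanachRightModule A Y} {T : X →L[ℂ] Y} {a : A} :
    a ∈ intertwiners ρX ρY T ↔ ∀ x : X, T (ρX.act x a) = ρY.act (T x) a := by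
  simp [intertwiners, sub_eq_zero]

theorem isClosed_intertwiners [NonUnitalCStarAlgebra A] (ρX : BanachRightModule A X)
    (ρY : BanachRightModule A Y) (T : X →L[ℂ] Y) :
    IsClosed (intertwiners ρX ρY T : Set A) := by
  rw [intertwiners, Submodule.coe_iInf]
  exact isClosed_iInter fun x => (T.comp (ρX.act x) - ρY.act (T x)).isClosed_ker

theorem map_act_eq_of_sandwich_eq_zero [CStarAlgebra A] {ρX : BanachRightModule A X}
    {ρY : BanachRightModule A Y} (hX1 : ∀ x : X, ρX.act x 1 = x)
    (hY1 : ∀ y : Y, ρY.act y 1 = y) {T : X →L[ℂ] Y} {e : A}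
    (h₁ : sandwich ρX ρY T (1 - e) e = 0) (h₂ : sandwich ρX ρY T e (1 - e) = 0) (x : X) :
    T (ρX.act x e) = ρY.act (T x) e := by
  have h₁x : ρY.act (T (ρX.act x (1 - e))) e = 0 := by
    simpa only [sandwich_apply, zero_apply] using DFunLike.congr_fun h₁ x
  have h₂x : ρY.act (T (ρX.act x e)) (1 - e) = 0 := by
    simpa only [sandwich_apply, zero_apply] using DFunLike.congr_fun h₂ x
  calc T (ρX.act x e)
      = ρY.act (T (ρX.act x e)) e + ρY.act (T (ρX.act x e)) (1 - e) := by
        rw [← map_add, add_sub_cancel, hY1]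
    _ = ρY.act (T (ρX.act x e)) e + ρY.act (T (ρX.act x (1 - e))) e := by
        rw [h₁x, h₂x]
    _ = ρY.act (T x) e := by
        rw [← add_apply, ← map_add, ← map_add, ← map_add, add_sub_cancel, hX1]

end Intertwiners

end

theorem stmt14_general {A X Y : Type*} [CStarAlgebra A]
    [NormedAddCommGroup X] [NormedSpace ℂ X]
    [NormedAddCommGroup Y] [NormedSpace ℂ Y]
    (hRR0 : ∀ a : A, IsSelfAdjoint a →
      a ∈ closure {b : A | IsSelfAdjoint b ∧ (spectrum ℂ b).Finite})
    (ρX : BanachRightModule A X) (ρY : BanachRightModule A Y)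
    (hX1 : ∀ x : X, ρX.act x 1 = x) (hY1 : ∀ y : Y, ρY.act y 1 = y)
    (T : X →L[ℂ] Y)
    (h : ∀ e : A, IsProjection e → sandwich ρX ρY T (1 - e) e = 0) :
    ∀ (x : X) (a : A), T (ρX.act x a) = ρY.act (T x) a := by
  have hproj : Submodule.span ℂ {e : A | IsProjection e} ≤ intertwiners ρX ρY T :=
    Submodule.span_le.2 fun e he => mem_intertwiners.2 <|
      map_act_eq_of_sandwich_eq_zero hX1 hY1 (h e he)
        (by simpa only [sub_sub_cancel] using h _ he.one_sub)
  intro x a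
  have ha : a ∈ intertwiners ρX ρY T :=
    Submodule.topologicalClosure_minimal _ hproj (isClosed_intertwiners ρX ρY T)
      (by simp [topologicalClosure_span_isProjection_eq_top hRR0])
  exact mem_intertwiners.1 ha x

/-- Let `A` be a unital C*-algebra of real rank zero, `X` and `Y`
unital Banach right `A`-modules, and `T : X → Y` a continuous linear map such that
`e⊥Te = 0` for every projection `e ∈ A` (where `(e⊥Te)(x) = T(x·(1−e))·e`).
Then `T` is a right `A`-module homomorphism. -/
theorem stmt14 {A X Y : Type*} [CStarAlgebra A]
    [NormedAddCommGroup X] [NormedSpace ℂ X] [CompleteSpace X]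
    [NormedAddCommGroup Y] [NormedSpace ℂ Y] [CompleteSpace Y]
    (hRR0 : ∀ a : A, IsSelfAdjoint a →
      a ∈ closure {b : A | IsSelfAdjoint b ∧ (spectrum ℂ b).Finite})
    (ρX : BanachRightModule A X) (ρY : BanachRightModule A Y)
    (hX1 : ∀ x : X, ρX.act x 1 = x) (hY1 : ∀ y : Y, ρY.act y 1 = y)
    (T : X →L[ℂ] Y)
    (h : ∀ e : A, IsProjection e → sandwich ρX ρY T (1 - e) e = 0) :
    ∀ (x : X) (a : A), T (ρX.act x a) = ρY.act (T x) a :=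
  stmt14_general hRR0 ρX ρY hX1 hY1 T h
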